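/- The recurrence coefficients satisfy the Toda system in the parameter c: for every c > 0, d/dc (a_n(c)²) = (a_n(c)²/c)·(b_n(c) − b_{n−1}(c)) for 1 ≤ n ≤ N, and d/dc b_n(c) = (a_{n+1}(c)² − a_n(c)²)/c for 0 ≤ n ≤ N−1. -/

import Mathlib

/-!
Fix `c > 0`, write `⟪q, r⟫ = ∑ₖ q(k) r(k) W(k) cᵏ`, `Q n = p n c` and `D n = ∂ₛ p n s` at `s = c`,
and let `J m n = ⟪X Q m, Q n⟫` be the (tridiagonal) Jacobi matrix, so that `aₙ = J n (n-1)` and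
`bₙ = J n n`. Since `∂ₛ sᵏ = s⁻¹ k sᵏ`, differentiating `⟪p m, p n⟫ = δₘₙ` gives
`⟪D m, Q n⟫ + ⟪Q m, D n⟫ + c⁻¹ J m n = 0`; as `deg D n ≤ n`, this determines the coordinates of
`D n` in the orthonormal basis `Q`: `-c⁻¹ J n j` for `j < n`, `-c⁻¹ bₙ / 2` for `j = n`, and `0`
above. Differentiating `J` in the same way and expanding every pairing in the basis `Q`, the
band structure of `J` leaves only a few terms, and these add up to the Toda equations.
-/

open Polynomial Finset Topology

namespace Polynomial

variable {K : Type*} [Field K] {Q : ℕ → K[X]}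

theorem mem_span_image_Iio_of_degree_lt {m : ℕ} (hQ : ∀ i < m, (Q i).degree = i) {q : K[X]}
    (hq : q.degree < m) : q ∈ Submodule.span K (Q '' Set.Iio m) := by
  classical
  let S : Sequence K := ⟨fun i => if i < m then Q i else X ^ i, fun i => by
    split_ifs with h
    · exact hQ i h
    · simp⟩
  have hS : S '' Set.Iio m = Q '' Set.Iio m := Set.image_congr fun i hi => if_pos hi
  rw [← hS, S.span_degreeLT fun i _ => (leadingCoeff_ne_zero.2 (S.ne_zero i)).isUnit]
  exact mem_degreeLT.2 hq

variable (B : LinearMap.BilinForm K K[X])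

theorem bilinForm_eq_zero_of_degree_lt {n : ℕ} (hQ : ∀ i < n, (Q i).degree = i) {r : K[X]}
    (horth : ∀ i < n, B (Q i) r = 0) {q : K[X]} (hq : q.degree < n) : B q r = 0 := by
  have hker : Submodule.span K (Q '' Set.Iio n) ≤ LinearMap.ker (B.flip r) :=
    Submodule.span_le.2 <| by rintro _ ⟨i, hi, rfl⟩; exact horth i hi
  exact hker (mem_span_image_Iio_of_degree_lt hQ hq)

structure IsOrthonormalSystem (N : ℕ) (Q : ℕ → K[X]) : Prop where
  degree_eq : ∀ n ≤ N, (Q n).degree = n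
  apply_eq : ∀ m ≤ N, ∀ n ≤ N, B (Q m) (Q n) = if m = n then 1 else 0

variable {B} {N : ℕ}

theorem IsOrthonormalSystem.of_natDegree_eq (hdeg : ∀ n ≤ N, (Q n).natDegree = n)
    (horth : ∀ m ≤ N, ∀ n ≤ N, B (Q m) (Q n) = if m = n then 1 else 0) :
    IsOrthonormalSystem B N Q where
  degree_eq n hn := by
    have hne : Q n ≠ 0 := by
      rintro h
      simpa [h] using horth n hn n hn
    rw [degree_eq_natDegree hne, hdeg n hn]
  apply_eq := horth

namespace IsOrthonormalSystem

theorem degree_X_mul (hQ : IsOrthonormalSystem B N Q) {n : ℕ} (hn : n ≤ N) :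
    (X * Q n).degree = ↑(n + 1) := by
  rw [degree_mul, degree_X, hQ.degree_eq n hn, add_comm]
  rfl

theorem degree_X_mul_le (hQ : IsOrthonormalSystem B N Q) {n : ℕ} (hn : n + 1 ≤ N) :
    (X * Q n).degree ≤ (N : WithBot ℕ) :=
  (hQ.degree_X_mul (n := n) (by omega)).trans_le (by exact_mod_cast hn)

theorem apply_eq_zero_of_degree_lt (hQ : IsOrthonormalSystem B N Q) {n : ℕ} (hn : n ≤ N)
    {q : K[X]} (hq : q.degree < n) : B q (Q n) = 0 :=
  bilinForm_eq_zero_of_degree_lt B (fun i hi => hQ.degree_eq i (by omega))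
    (fun i hi => by rw [hQ.apply_eq i (by omega) n hn, if_neg hi.ne]) hq

theorem eq_sum_smul (hQ : IsOrthonormalSystem B N Q) {q : K[X]} (hq : q.degree ≤ N) :
    q = ∑ j ∈ range (N + 1), B q (Q j) • Q j := by
  have hspan : q ∈ Submodule.span K (Q '' Set.Iio (N + 1)) :=
    mem_span_image_Iio_of_degree_lt (fun i hi => hQ.degree_eq i (by omega))
      (hq.trans_lt (by exact_mod_cast N.lt_succ_self))
  clear hq
  induction hspan using Submodule.span_induction with
  | mem x hx =>
    obtain ⟨i, hi, rfl⟩ := hx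
    have hi : i ≤ N := Nat.lt_succ_iff.1 hi
    rw [sum_congr rfl fun j hj => by
      rw [hQ.apply_eq i hi j (Nat.lt_succ_iff.1 (mem_range.1 hj))]]
    simp [Nat.lt_succ_iff.2 hi]
  | zero => simp
  | add x y _ _ hx hy =>
    simp only [map_add, LinearMap.add_apply, add_smul, sum_add_distrib]
    rw [← hx, ← hy]
  | smul a x _ hx =>
    simp only [map_smul, LinearMap.smul_apply, smul_eq_mul, mul_smul, ← smul_sum]
    rw [← hx]

theorem apply_eq_sum_mul (hQ : IsOrthonormalSystem B N Q) {q : K[X]} (hq : q.degree ≤ N)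
    (r : K[X]) : B q r = ∑ j ∈ range (N + 1), B q (Q j) * B (Q j) r := by
  conv_lhs => rw [hQ.eq_sum_smul hq]
  simp [map_sum]

end IsOrthonormalSystem

section Toda

variable {B : LinearMap.BilinForm ℝ ℝ[X]} {N : ℕ} {Q D : ℕ → ℝ[X]} {c : ℝ}

theorem IsOrthonormalSystem.apply_X_mul_eq_zero_of_succ_lt (hQ : IsOrthonormalSystem B N Q)
    {m n : ℕ} (hmn : m + 1 < n) (hn : n ≤ N) : B (X * Q m) (Q n) = 0 :=
  hQ.apply_eq_zero_of_degree_lt hn <| by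
    rw [hQ.degree_X_mul (by omega)]
    exact_mod_cast hmn

theorem IsOrthonormalSystem.apply_X_mul_eq_zero_of_succ_lt' (hQ : IsOrthonormalSystem B N Q)
    (hsymm : ∀ q r, B q r = B r q) (hX : ∀ q r, B (X * q) r = B q (X * r)) {m n : ℕ}
    (hnm : n + 1 < m) (hm : m ≤ N) : B (X * Q m) (Q n) = 0 := by
  rw [hX, hsymm, hQ.apply_X_mul_eq_zero_of_succ_lt hnm hm]

/-- The relations satisfied at `s = c` by `D n = ∂ₛ p n s` when `Q n = p n c` and `p · s` is
orthonormal for the weights `W k * s ^ k`: the last term comes from `∂ₛ sᵏ = s⁻¹ * k * sᵏ`. -/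
structure IsOrthonormalDeriv (B : LinearMap.BilinForm ℝ ℝ[X]) (N : ℕ) (c : ℝ)
    (Q D : ℕ → ℝ[X]) : Prop where
  degree_le : ∀ n ≤ N, (D n).degree ≤ n
  apply_add : ∀ m ≤ N, ∀ n ≤ N, B (D m) (Q n) + B (Q m) (D n) + c⁻¹ * B (X * Q m) (Q n) = 0

namespace IsOrthonormalDeriv

theorem degree_le' (hD : IsOrthonormalDeriv B N c Q D) {n : ℕ} (hn : n ≤ N) :
    (D n).degree ≤ N :=
  (hD.degree_le n hn).trans (by exact_mod_cast hn)

theorem apply_of_lt (hD : IsOrthonormalDeriv B N c Q D) (hQ : IsOrthonormalSystem B N Q)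
    (hsymm : ∀ q r, B q r = B r q) (hX : ∀ q r, B (X * q) r = B q (X * r)) {j n : ℕ}
    (hjn : j < n) (hn : n ≤ N) : B (D n) (Q j) = -c⁻¹ * B (X * Q n) (Q j) := by
  have h := hD.apply_add j (by omega) n hn
  rw [hQ.apply_eq_zero_of_degree_lt hn
      ((hD.degree_le j (by omega)).trans_lt (by exact_mod_cast hjn)),
    hsymm (Q j), hX, hsymm (Q j)] at h
  linarith

theorem apply_self (hD : IsOrthonormalDeriv B N c Q D) (hsymm : ∀ q r, B q r = B r q)
    {n : ℕ} (hn : n ≤ N) : B (D n) (Q n) = -c⁻¹ * B (X * Q n) (Q n) / 2 := by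
  have h := hD.apply_add n hn n hn
  rw [hsymm (Q n)] at h
  linarith

theorem apply_of_gt (hD : IsOrthonormalDeriv B N c Q D) (hQ : IsOrthonormalSystem B N Q)
    {j n : ℕ} (hnj : n < j) (hj : j ≤ N) : B (D n) (Q j) = 0 :=
  hQ.apply_eq_zero_of_degree_lt hj
    ((hD.degree_le n (by omega)).trans_lt (by exact_mod_cast hnj))

theorem toda_offDiag (hD : IsOrthonormalDeriv B N c Q D) (hQ : IsOrthonormalSystem B N Q)
    (hsymm : ∀ q r, B q r = B r q) (hX : ∀ q r, B (X * q) r = B q (X * r)) {n : ℕ}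
    (hn : n + 1 ≤ N) :
    B (X * D (n + 1)) (Q n) + B (X * Q (n + 1)) (D n) + c⁻¹ * B (X * Q (n + 1)) (X * Q n)
      = c⁻¹ * B (X * Q (n + 1)) (Q n)
          * (B (X * Q (n + 1)) (Q (n + 1)) - B (X * Q n) (Q n)) / 2 := by
  have hJ : ∀ i j, B (Q j) (X * Q i) = B (X * Q i) (Q j) := fun i j => hsymm _ _
  have hJsymm : B (X * Q n) (Q (n + 1)) = B (X * Q (n + 1)) (Q n) := by rw [hX, hsymm]
  rw [hX, hsymm (X * Q (n + 1)) (D n), hsymm (X * Q (n + 1)),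
    hQ.apply_eq_sum_mul (hD.degree_le' hn), hQ.apply_eq_sum_mul (hD.degree_le' (by omega)),
    hQ.apply_eq_sum_mul (hQ.degree_X_mul_le hn), mul_sum, ← sum_add_distrib,
    ← sum_add_distrib, sum_eq_add_of_mem n (n + 1) (by simp; omega) (by simp; omega) (by omega)]
  · simp only [hJ]
    rw [hD.apply_of_lt hQ hsymm hX (Nat.lt_add_one n) hn, hD.apply_self hsymm hn,
      hD.apply_self hsymm (by omega), hD.apply_of_gt hQ (Nat.lt_add_one n) hn, hJsymm]
    ring
  · intro j hj hjn
    simp only [mem_range] at hj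
    simp only [hJ]
    rcases lt_or_gt_of_ne hjn.1 with hlt | hgt
    · rw [hD.apply_of_lt hQ hsymm hX (by omega) hn,
        hQ.apply_X_mul_eq_zero_of_succ_lt' hsymm hX (by omega) hn]
      ring
    · rw [hD.apply_of_gt hQ (by omega) (by omega), hD.apply_of_gt hQ hgt (by omega),
        hQ.apply_X_mul_eq_zero_of_succ_lt (by omega) (by omega)]
      ring

theorem toda_diag (hD : IsOrthonormalDeriv B N c Q D) (hQ : IsOrthonormalSystem B N Q)
    (hsymm : ∀ q r, B q r = B r q) (hX : ∀ q r, B (X * q) r = B q (X * r)) {n : ℕ}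
    (hn : n + 1 ≤ N) :
    2 * B (X * D n) (Q n) + c⁻¹ * B (X * Q n) (X * Q n)
      = c⁻¹ * (B (X * Q (n + 1)) (Q n) ^ 2 - ∑ j ∈ range n, B (X * Q n) (Q j) ^ 2) := by
  have hJ : ∀ i j, B (Q j) (X * Q i) = B (X * Q i) (Q j) := fun i j => hsymm _ _
  have hJsymm : B (X * Q n) (Q (n + 1)) = B (X * Q (n + 1)) (Q n) := by rw [hX, hsymm]
  rw [hX (D n), hQ.apply_eq_sum_mul (hD.degree_le' (by omega)),
    hQ.apply_eq_sum_mul (hQ.degree_X_mul_le hn), mul_sum, mul_sum, ← sum_add_distrib,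
    ← sum_range_add_sum_Ico _ (by omega : n ≤ N + 1),
    sum_eq_single_of_mem (s := Ico n (N + 1)) (n + 1) (by simp; omega)]
  · have hlower : ∀ j ∈ range n, 2 * (B (D n) (Q j) * B (Q j) (X * Q n))
        + c⁻¹ * (B (X * Q n) (Q j) * B (Q j) (X * Q n)) = -(c⁻¹ * B (X * Q n) (Q j) ^ 2) := by
      intro j hj
      rw [hD.apply_of_lt hQ hsymm hX (mem_range.1 hj) (by omega), hJ]
      ring
    rw [sum_congr rfl hlower, sum_neg_distrib, ← mul_sum,
      hD.apply_of_gt hQ (Nat.lt_add_one n) hn, hJ, hJsymm]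
    ring
  · intro j hj hjn
    rw [mem_Ico] at hj
    rcases hj.1.eq_or_lt with rfl | hgt
    · rw [hD.apply_self hsymm (by omega), hJ]
      ring
    · rw [hD.apply_of_gt hQ hgt (by omega),
        hQ.apply_X_mul_eq_zero_of_succ_lt (by omega) (by omega)]
      ring

end IsOrthonormalDeriv

theorem IsOrthonormalSystem.sum_range_sq_apply_X_mul (hQ : IsOrthonormalSystem B N Q)
    (hsymm : ∀ q r, B q r = B r q) (hX : ∀ q r, B (X * q) r = B q (X * r)) {n : ℕ}
    (hn : n + 1 ≤ N) :
    ∑ j ∈ range (n + 1), B (X * Q (n + 1)) (Q j) ^ 2 = B (X * Q (n + 1)) (Q n) ^ 2 := by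
  rw [sum_range_succ, sum_eq_zero fun j hj => by
    rw [hQ.apply_X_mul_eq_zero_of_succ_lt' hsymm hX (by simp at hj; omega) hn]; ring, zero_add]

end Toda

end Polynomial

noncomputable def discreteInner (N : ℕ) (w : ℕ → ℝ) : LinearMap.BilinForm ℝ ℝ[X] :=
  LinearMap.mk₂ ℝ (fun q r => ∑ k ∈ range (N + 1), q.eval (k : ℝ) * r.eval (k : ℝ) * w k)
    (fun _ _ _ => by simp only [eval_add, add_mul, sum_add_distrib])
    (fun _ _ _ => by
      simp only [eval_smul, smul_eq_mul, mul_sum]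
      exact sum_congr rfl fun _ _ => by ring)
    (fun _ _ _ => by simp only [eval_add, mul_add, add_mul, sum_add_distrib])
    (fun _ _ _ => by
      simp only [eval_smul, smul_eq_mul, mul_sum]
      exact sum_congr rfl fun _ _ => by ring)

section discreteInner

variable {N : ℕ} {w : ℕ → ℝ}

@[simp]
theorem discreteInner_apply (q r : ℝ[X]) :
    discreteInner N w q r = ∑ k ∈ range (N + 1), q.eval (k : ℝ) * r.eval (k : ℝ) * w k :=
  rfl

theorem discreteInner_comm (q r : ℝ[X]) : discreteInner N w q r = discreteInner N w r q := by
  simp only [discreteInner_apply]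
  exact sum_congr rfl fun _ _ => by ring

theorem discreteInner_X_mul (q r : ℝ[X]) :
    discreteInner N w (X * q) r = discreteInner N w q (X * r) := by
  simp only [discreteInner_apply]
  exact sum_congr rfl fun _ _ => by simp only [eval_mul, eval_X]; ring

end discreteInner

noncomputable def paramDeriv (P : ℝ → ℝ[X]) (d : ℕ) (c : ℝ) : ℝ[X] :=
  ∑ i ∈ range (d + 1), C (deriv (fun s => (P s).coeff i) c) * X ^ i

section paramDeriv

variable {P : ℝ → ℝ[X]} {d : ℕ} {c : ℝ}

theorem hasDerivAt_eval_paramDeriv (hdeg : ∀ᶠ s in 𝓝 c, (P s).natDegree ≤ d)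
    (hdiff : ∀ i ≤ d, DifferentiableAt ℝ (fun s => (P s).coeff i) c) (x : ℝ) :
    HasDerivAt (fun s => (P s).eval x) ((paramDeriv P d c).eval x) c := by
  have hsum : HasDerivAt (fun s => ∑ i ∈ range (d + 1), (P s).coeff i * x ^ i)
      ((paramDeriv P d c).eval x) c := by
    simp only [paramDeriv, eval_finsetSum, eval_mul, eval_C, eval_pow, eval_X]
    exact HasDerivAt.fun_sum fun i hi =>
      (hdiff i (Nat.lt_succ_iff.1 (mem_range.1 hi))).hasDerivAt.mul_const _
  exact hsum.congr_of_eventuallyEq <|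
    hdeg.mono fun s hs => eval_eq_sum_range' (Nat.lt_succ_of_le hs) x

theorem natDegree_paramDeriv_le {n : ℕ} (hdeg : ∀ᶠ s in 𝓝 c, (P s).natDegree ≤ n) :
    (paramDeriv P d c).natDegree ≤ n := by
  rw [natDegree_le_iff_coeff_eq_zero]
  intro i hi
  have hev : (fun s => (P s).coeff i) =ᶠ[𝓝 c] fun _ => 0 :=
    hdeg.mono fun s hs => coeff_eq_zero_of_natDegree_lt (hs.trans_lt hi)
  simp [paramDeriv, coeff_X_pow, hev.deriv_eq]

end paramDeriv

theorem hasDerivAt_discreteInner_pow {N : ℕ} {W : ℕ → ℝ} {P R : ℝ → ℝ[X]} {P' R' : ℝ[X]}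
    {c : ℝ} (hc : c ≠ 0) (hP : ∀ x, HasDerivAt (fun s => (P s).eval x) (P'.eval x) c)
    (hR : ∀ x, HasDerivAt (fun s => (R s).eval x) (R'.eval x) c) :
    HasDerivAt (fun s => discreteInner N (fun k => W k * s ^ k) (P s) (R s))
      (discreteInner N (fun k => W k * c ^ k) P' (R c)
        + discreteInner N (fun k => W k * c ^ k) (P c) R'
        + c⁻¹ * discreteInner N (fun k => W k * c ^ k) (X * P c) (R c)) c := by
  simp only [discreteInner_apply, mul_sum, ← sum_add_distrib]
  refine HasDerivAt.fun_sum fun k _ => ?_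
  have hpow : (k : ℝ) * c ^ (k - 1) = c⁻¹ * (k * c ^ k) := by
    rcases k with _ | k
    · simp
    · rw [Nat.add_sub_cancel, pow_succ]
      field_simp
  refine (((hP k).fun_mul (hR k)).fun_mul ((hasDerivAt_pow k c).const_mul (W k))).congr_deriv ?_
  rw [hpow, eval_mul, eval_X]
  ring

/-- `jacobiEntry N W p s n (n - 1)` is `aₙ(s)` and `jacobiEntry N W p s n n` is `bₙ(s)`. -/
noncomputable def jacobiEntry (N : ℕ) (W : ℕ → ℝ) (p : ℕ → ℝ → ℝ[X]) (s : ℝ) (m n : ℕ) : ℝ :=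
  discreteInner N (fun k => W k * s ^ k) (X * p m s) (p n s)

section family

variable {N : ℕ} {W : ℕ → ℝ} {p : ℕ → ℝ → ℝ[X]} {D : ℕ → ℝ[X]} {c : ℝ}

theorem isOrthonormalDeriv_of_hasDerivAt (hc : c ≠ 0) (hDdeg : ∀ n ≤ N, (D n).degree ≤ n)
    (hderiv : ∀ n ≤ N, ∀ x, HasDerivAt (fun s => (p n s).eval x) ((D n).eval x) c)
    (horth : ∀ᶠ s in 𝓝 c, ∀ m ≤ N, ∀ n ≤ N,
      discreteInner N (fun k => W k * s ^ k) (p m s) (p n s) = if m = n then 1 else 0) :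
    IsOrthonormalDeriv (discreteInner N (fun k => W k * c ^ k)) N c (fun n => p n c) D where
  degree_le := hDdeg
  apply_add m hm n hn :=
    (hasDerivAt_discreteInner_pow hc (hderiv m hm) (hderiv n hn)).unique <|
      (hasDerivAt_const c _).congr_of_eventuallyEq (horth.mono fun _ hs => hs m hm n hn)

theorem hasDerivAt_jacobiEntry (hc : c ≠ 0) {m n : ℕ}
    (hm : ∀ x, HasDerivAt (fun s => (p m s).eval x) ((D m).eval x) c)
    (hn : ∀ x, HasDerivAt (fun s => (p n s).eval x) ((D n).eval x) c) :
    HasDerivAt (fun s => jacobiEntry N W p s m n)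
      (discreteInner N (fun k => W k * c ^ k) (X * D m) (p n c)
        + discreteInner N (fun k => W k * c ^ k) (X * p m c) (D n)
        + c⁻¹ * discreteInner N (fun k => W k * c ^ k) (X * p m c) (X * p n c)) c := by
  have h := hasDerivAt_discreteInner_pow (N := N) (W := W) (P := fun s => X * p m s)
    (P' := X * D m) hc (fun x => by simpa using (hm x).const_mul x) hn
  rwa [discreteInner_X_mul (X * p m c)] at h

theorem toda_jacobiEntry (hc : 0 < c)
    (hdeg : ∀ s : ℝ, 0 < s → ∀ n, n ≤ N → (p n s).natDegree = n)
    (horth : ∀ s : ℝ, 0 < s → ∀ m, m ≤ N → ∀ n, n ≤ N →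
      discreteInner N (fun k => W k * s ^ k) (p m s) (p n s) = if m = n then 1 else 0)
    (hdiff : ∀ n, n ≤ N → ∀ i : ℕ, DifferentiableOn ℝ (fun s => (p n s).coeff i) (Set.Ioi 0)) :
    (∀ n, n + 1 ≤ N → HasDerivAt (fun s => jacobiEntry N W p s (n + 1) n)
      (c⁻¹ * jacobiEntry N W p c (n + 1) n
        * (jacobiEntry N W p c (n + 1) (n + 1) - jacobiEntry N W p c n n) / 2) c) ∧
    (∀ n, n + 1 ≤ N → HasDerivAt (fun s => jacobiEntry N W p s n n)
      (c⁻¹ * (jacobiEntry N W p c (n + 1) n ^ 2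
        - ∑ j ∈ range n, jacobiEntry N W p c n j ^ 2)) c) := by
  have hpos : ∀ᶠ s in 𝓝 c, 0 < s := eventually_gt_nhds hc
  have hderiv : ∀ n ≤ N, ∀ x,
      HasDerivAt (fun s => (p n s).eval x) ((paramDeriv (p n) N c).eval x) c := fun n hn =>
    hasDerivAt_eval_paramDeriv (hpos.mono fun s hs => (hdeg s hs n hn).trans_le hn)
      fun i _ => (hdiff n hn i).differentiableAt (Ioi_mem_nhds hc)
  have hQ := IsOrthonormalSystem.of_natDegree_eq (hdeg c hc) (horth c hc)
  have hD := isOrthonormalDeriv_of_hasDerivAt hc.ne'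
    (fun n hn => degree_le_of_natDegree_le <|
      natDegree_paramDeriv_le (hpos.mono fun s hs => (hdeg s hs n hn).le))
    hderiv (hpos.mono horth)
  have hJ (m n : ℕ) := hasDerivAt_jacobiEntry (N := N) (W := W) (p := p)
    (D := fun n => paramDeriv (p n) N c) (m := m) (n := n) hc.ne'
  refine ⟨fun n hn => ?_, fun n hn => ?_⟩
  · have h := hJ (n + 1) n (hderiv (n + 1) hn) (hderiv n (by omega))
    rwa [hD.toda_offDiag hQ discreteInner_comm discreteInner_X_mul hn] at h
  · have h := hJ n n (hderiv n (by omega)) (hderiv n (by omega))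
    have hsymm : discreteInner N (fun k => W k * c ^ k) (X * p n c) (paramDeriv (p n) N c)
        = discreteInner N (fun k => W k * c ^ k) (X * paramDeriv (p n) N c) (p n c) := by
      rw [discreteInner_X_mul, discreteInner_comm]
    rwa [hsymm, ← two_mul, hD.toda_diag hQ discreteInner_comm discreteInner_X_mul hn] at h

end family

theorem toda_system_general
    (N : ℕ)
    (W : ℕ → ℝ)
    (p : ℕ → ℝ → Polynomial ℝ)
    (hdeg : ∀ c : ℝ, 0 < c → ∀ n, n ≤ N → (p n c).natDegree = n)
    (horth : ∀ c : ℝ, 0 < c → ∀ m, m ≤ N → ∀ n, n ≤ N →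
      ∑ k ∈ Finset.range (N + 1),
        (p m c).eval (k : ℝ) * (p n c).eval (k : ℝ) * (W k * c ^ k)
        = if m = n then 1 else 0)
    (hdiff : ∀ n, n ≤ N → ∀ i : ℕ,
      DifferentiableOn ℝ (fun c : ℝ => (p n c).coeff i) (Set.Ioi 0))
    (a b : ℕ → ℝ → ℝ)
    (ha0 : ∀ c : ℝ, a 0 c = 0)
    (ha : ∀ n, 1 ≤ n → n ≤ N → ∀ c : ℝ, 0 < c →
      a n c = ∑ k ∈ Finset.range (N + 1),
        (k : ℝ) * (p n c).eval (k : ℝ) * (p (n - 1) c).eval (k : ℝ) * (W k * c ^ k))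
    (hb : ∀ n, n ≤ N → ∀ c : ℝ, 0 < c →
      b n c = ∑ k ∈ Finset.range (N + 1),
        (k : ℝ) * ((p n c).eval (k : ℝ)) ^ 2 * (W k * c ^ k)) :
    ∀ c : ℝ, 0 < c →
      (∀ n, 1 ≤ n → n ≤ N →
        HasDerivAt (fun s : ℝ => (a n s) ^ 2)
          ((a n c) ^ 2 / c * (b n c - b (n - 1) c)) c) ∧
      (∀ n, n + 1 ≤ N →
        HasDerivAt (b n) (((a (n + 1) c) ^ 2 - (a n c) ^ 2) / c) c) := by
  intro c hc
  obtain ⟨hoff, hdiag⟩ := toda_jacobiEntry hc hdeg horth hdiff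
  have hpos : ∀ᶠ s in 𝓝 c, 0 < s := eventually_gt_nhds hc
  have haJ : ∀ n, n + 1 ≤ N → ∀ s, 0 < s → a (n + 1) s = jacobiEntry N W p s (n + 1) n := by
    intro n hn s hs
    rw [ha (n + 1) (by omega) hn s hs, Nat.add_sub_cancel]
    simp only [jacobiEntry, discreteInner_apply, eval_mul, eval_X]
  have hbJ : ∀ n ≤ N, ∀ s, 0 < s → b n s = jacobiEntry N W p s n n := by
    intro n hn s hs
    rw [hb n hn s hs]
    simp only [jacobiEntry, discreteInner_apply, eval_mul, eval_X]
    exact sum_congr rfl fun k _ => by ring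
  refine ⟨fun n h1 hn => ?_, fun n hn => ?_⟩
  · obtain ⟨n, rfl⟩ : ∃ m, n = m + 1 := ⟨n - 1, by omega⟩
    have h := (hoff n hn).congr_of_eventuallyEq (hpos.mono fun s hs => haJ n hn s hs)
    refine (h.fun_pow 2).congr_deriv ?_
    rw [haJ n hn c hc, hbJ (n + 1) hn c hc, Nat.add_sub_cancel, hbJ n (by omega) c hc]
    ring
  · have hsum : ∑ j ∈ range n, jacobiEntry N W p c n j ^ 2 = a n c ^ 2 := by
      rcases n with _ | n
      · simp [ha0]
      · rw [haJ n (by omega) c hc]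
        exact (IsOrthonormalSystem.of_natDegree_eq (hdeg c hc) (horth c hc)
          ).sum_range_sq_apply_X_mul discreteInner_comm discreteInner_X_mul (by omega)
    have h := (hdiag n hn).congr_of_eventuallyEq (hpos.mono fun s hs => hbJ n (by omega) s hs)
    rwa [hsum, ← haJ n hn c hc, ← div_eq_inv_mul] at h

/-- The Toda system for the recurrence coefficients of orthonormal polynomials
with respect to the weight `w(k;c) = W(k) c^k` on `{0,…,N}`. -/
theorem toda_system
    (N : ℕ) (hN : 1 ≤ N)
    (W : ℕ → ℝ) (hW : ∀ k, k ≤ N → 0 < W k)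
    (p : ℕ → ℝ → Polynomial ℝ)
    (hdeg : ∀ c : ℝ, 0 < c → ∀ n, n ≤ N → (p n c).natDegree = n)
    (hlead : ∀ c : ℝ, 0 < c → ∀ n, n ≤ N → 0 < (p n c).leadingCoeff)
    (horth : ∀ c : ℝ, 0 < c → ∀ m, m ≤ N → ∀ n, n ≤ N →
      ∑ k ∈ Finset.range (N + 1),
        (p m c).eval (k : ℝ) * (p n c).eval (k : ℝ) * (W k * c ^ k)
        = if m = n then 1 else 0)
    (hdiff : ∀ n, n ≤ N → ∀ i : ℕ,
      DifferentiableOn ℝ (fun c : ℝ => (p n c).coeff i) (Set.Ioi 0))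
    (a b : ℕ → ℝ → ℝ)
    (ha0 : ∀ c : ℝ, a 0 c = 0)
    (haN1 : ∀ c : ℝ, a (N + 1) c = 0)
    (ha : ∀ n, 1 ≤ n → n ≤ N → ∀ c : ℝ, 0 < c →
      a n c = ∑ k ∈ Finset.range (N + 1),
        (k : ℝ) * (p n c).eval (k : ℝ) * (p (n - 1) c).eval (k : ℝ) * (W k * c ^ k))
    (hb : ∀ n, n ≤ N → ∀ c : ℝ, 0 < c →
      b n c = ∑ k ∈ Finset.range (N + 1),
        (k : ℝ) * ((p n c).eval (k : ℝ)) ^ 2 * (W k * c ^ k)) :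
    ∀ c : ℝ, 0 < c →
      (∀ n, 1 ≤ n → n ≤ N →
        HasDerivAt (fun s : ℝ => (a n s) ^ 2)
          ((a n c) ^ 2 / c * (b n c - b (n - 1) c)) c) ∧
      (∀ n, n + 1 ≤ N →
        HasDerivAt (b n) (((a (n + 1) c) ^ 2 - (a n c) ^ 2) / c) c) :=
  toda_system_general N W p hdeg horth hdiff a b ha0 ha hb
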